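/- For any real c with c(1+c) ≠ 0, on the 8-dimensional solvable Lie algebra with de¹ = de² = 0, de³ = e¹∧e³ − e²∧e⁴, de⁴ = e¹∧e⁴ + e²∧e³, de⁵ = c(e¹∧e⁵ − e²∧e⁶), de⁶ = c(e¹∧e⁶ + e²∧e⁵), de⁷ = −(1+c)(e¹∧e⁷ − e²∧e⁸), de⁸ = −(1+c)(e¹∧e⁸ + e²∧e⁷), the form F = Σⱼ₌₁⁴ e^{2j−1}∧e^{2j} satisfies dF = 2(e¹∧e³∧e⁴ + c e¹∧e⁵∧e⁶ − (1+c) e¹∧e⁷∧e⁸) and dF∧F∧F = 0. -/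
import Mathlib

set_option maxHeartbeats 2000000

noncomputable def E : Fin 8 → ExteriorAlgebra ℝ (Fin 8 → ℝ) :=
  fun i => ExteriorAlgebra.ι ℝ (Pi.single i 1)

lemma Esq (i : Fin 8) : E i * E i = 0 := ExteriorAlgebra.ι_sq_zero _

lemma Eswap (i j : Fin 8) : E i * E j = -(E j * E i) := by
  have := ExteriorAlgebra.ι_add_mul_swap (R := ℝ) (Pi.single i (1:ℝ) : Fin 8 → ℝ)
    (Pi.single j 1 : Fin 8 → ℝ)
  unfold E; linear_combination (norm := noncomm_ring) this

lemma Esq' (i : Fin 8) (x : ExteriorAlgebra ℝ (Fin 8 → ℝ)) : E i * (E i * x) = 0 := by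
  rw [← mul_assoc, Esq, zero_mul]

lemma Eswap' (i j : Fin 8) (x : ExteriorAlgebra ℝ (Fin 8 → ℝ)) (h : j < i) :
    E i * (E j * x) = -(E j * (E i * x)) := by
  rw [← mul_assoc, Eswap i j, ← mul_assoc, neg_mul]

lemma Eswap2 (i j : Fin 8) (h : j < i) : E i * E j = -(E j * E i) := Eswap i j

/-- For any real `c` with `c(1+c) ≠ 0`, on the 8-dimensional solvable Lie
algebra with `de¹ = de² = 0`, `de³ = e¹∧e³ − e²∧e⁴`, `de⁴ = e¹∧e⁴ + e²∧e³`,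
`de⁵ = c(e¹∧e⁵ − e²∧e⁶)`, `de⁶ = c(e¹∧e⁶ + e²∧e⁵)`,
`de⁷ = −(1+c)(e¹∧e⁷ − e²∧e⁸)`, `de⁸ = −(1+c)(e¹∧e⁸ + e²∧e⁷)`, the form
`F = Σⱼ e^{2j−1}∧e^{2j}` satisfies
`dF = 2(e¹∧e³∧e⁴ + c e¹∧e⁵∧e⁶ − (1+c) e¹∧e⁷∧e⁸)` and `dF∧F∧F = 0`. -/
theorem solvable8_family_balanced (c : ℝ) (hc : c * (1 + c) ≠ 0)
    (d : ExteriorAlgebra ℝ (Fin 8 → ℝ) →ₗ[ℝ] ExteriorAlgebra ℝ (Fin 8 → ℝ))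
    (hd1 : d 1 = 0)
    (hLeib : ∀ (v : Fin 8 → ℝ) (x : ExteriorAlgebra ℝ (Fin 8 → ℝ)),
      d (ExteriorAlgebra.ι ℝ v * x)
        = d (ExteriorAlgebra.ι ℝ v) * x - ExteriorAlgebra.ι ℝ v * d x)
    (h1 : d (E 0) = 0) (h2 : d (E 1) = 0)
    (h3 : d (E 2) = E 0 * E 2 - E 1 * E 3)
    (h4 : d (E 3) = E 0 * E 3 + E 1 * E 2)
    (h5 : d (E 4) = c • (E 0 * E 4 - E 1 * E 5))
    (h6 : d (E 5) = c • (E 0 * E 5 + E 1 * E 4))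
    (h7 : d (E 6) = (-(1 + c)) • (E 0 * E 6 - E 1 * E 7))
    (h8 : d (E 7) = (-(1 + c)) • (E 0 * E 7 + E 1 * E 6)) :
    d (E 0 * E 1 + E 2 * E 3 + E 4 * E 5 + E 6 * E 7)
      = (2 : ℝ) • (E 0 * E 2 * E 3 + c • (E 0 * E 4 * E 5)
          - (1 + c) • (E 0 * E 6 * E 7)) ∧
    d (E 0 * E 1 + E 2 * E 3 + E 4 * E 5 + E 6 * E 7) *
      ((E 0 * E 1 + E 2 * E 3 + E 4 * E 5 + E 6 * E 7) *
       (E 0 * E 1 + E 2 * E 3 + E 4 * E 5 + E 6 * E 7)) = 0 := by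
  have hLeibE : ∀ (i : Fin 8) (x : ExteriorAlgebra ℝ (Fin 8 → ℝ)),
      d (E i * x) = d (E i) * x - E i * d x := fun i x => hLeib (Pi.single i 1) x
  have hdF : d (E 0 * E 1 + E 2 * E 3 + E 4 * E 5 + E 6 * E 7)
      = (2 : ℝ) • (E 0 * E 2 * E 3 + c • (E 0 * E 4 * E 5)
          - (1 + c) • (E 0 * E 6 * E 7)) := by
    rw [map_add, map_add, map_add, hLeibE 0, hLeibE 2, hLeibE 4, hLeibE 6,
      h1, h2, h3, h4, h5, h6, h7, h8]
    simp (config := { decide := true }) only [zero_mul, mul_zero, sub_mul, add_mul,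
      smul_mul_assoc, mul_smul_comm, mul_sub, mul_add, smul_add, smul_sub, smul_neg,
      mul_neg, neg_mul, neg_neg, mul_assoc, Esq, Esq', Eswap', Eswap2, zero_sub,
      sub_zero, neg_zero, add_zero, zero_add, smul_zero]
    module
  refine ⟨hdF, ?_⟩
  rw [hdF]
  simp (config := { decide := true }) only [zero_mul, mul_zero, sub_mul, add_mul,
    smul_mul_assoc, mul_smul_comm, mul_sub, mul_add, smul_add, smul_sub, smul_neg,
    mul_neg, neg_mul, neg_neg, mul_assoc, Esq, Esq', Eswap', Eswap2, zero_sub,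
    sub_zero, neg_zero, add_zero, zero_add, smul_zero]
  module
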